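/- arXiv:2603.23859 — 2 statements merged into one kernel-verified Lean document; each statement's English description precedes it below -/
import Mathlib

section
/- Consider a ULA of N antennas with positions x₁,…,x_N ∈ ℝ along its axis, array response entries a_n(f,θ) = exp(j·(2πf/c)·(r₁ᵀ v(θ))·x_n), where v(θ) = [cos θ cos φ₀, cos θ sin φ₀, sin θ]ᵀ and r₁ is the first column of the rotation matrix. If the rotation angles satisfy α = β = 0 and γ = φ₀ + π/2, then a_n(f,θ) = 1 for all n, all frequencies f, and all elevation angles θ; consequently, with ω = (1/√N)·[1,…,1]ᵀ, the beam gain G(f,θ) = |ωᴴ a(f,θ)|² equals N for all f and θ. -/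
open Real Complex Finset

/-! With `α = β = 0` the phase projection `r₁ᵀ v(θ)` reduces to `cos θ · cos (γ - φ₀)`, and
`γ = φ₀ + π/2` makes `r₁` orthogonal to every look direction `v(θ)` of the coverage arc. All
phases then vanish, every array response entry is `1`, and the uniform beamformer adds `N`
unit terms coherently. -/

lemma cos_add_pi_div_two_mul_cos_add_sin_add_pi_div_two_mul_sin (φ : ℝ) :
    Real.cos (φ + π / 2) * Real.cos φ + Real.sin (φ + π / 2) * Real.sin φ = 0 := by
  rw [Real.cos_add_pi_div_two, Real.sin_add_pi_div_two]
  ring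

lemma norm_sum_inv_sqrt_card_sq (ι : Type*) [Fintype ι] :
    ‖∑ _i : ι, ((1 / Real.sqrt (Fintype.card ι) : ℝ) : ℂ)‖ ^ 2 = Fintype.card ι := by
  rw [sum_const, card_univ, nsmul_eq_mul, ← ofReal_natCast, ← ofReal_mul, norm_real,
    Real.norm_eq_abs, sq_abs, mul_pow, div_pow, Real.sq_sqrt (Nat.cast_nonneg _)]
  rcases Nat.eq_zero_or_pos (Fintype.card ι) with h | h
  · simp [h]
  · field_simp

theorem ula_rotation_eliminates_beam_squint_general {N : ℕ}
    (c : ℝ) (φ₀ : ℝ) (x : Fin N → ℝ) :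
    ∀ α β γ : ℝ, α = 0 → β = 0 → γ = φ₀ + Real.pi / 2 →
    -- the effective phase projection r₁ᵀ v(θ)
    ∀ proj : ℝ → ℝ,
    (∀ θ, proj θ =
      (Real.cos β * Real.cos γ) * (Real.cos θ * Real.cos φ₀) +
      (Real.sin α * Real.sin β * Real.cos γ + Real.cos α * Real.sin γ) *
        (Real.cos θ * Real.sin φ₀) +
      (Real.sin α * Real.sin γ - Real.cos α * Real.sin β * Real.cos γ) * Real.sin θ) →
    -- array response entries
    ∀ a : ℝ → ℝ → Fin N → ℂ,
    (∀ f θ n, a f θ n =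
      Complex.exp (Complex.I * (((2 * Real.pi * f / c) * proj θ * x n : ℝ) : ℂ))) →
    (∀ f θ n, a f θ n = 1) ∧
    (∀ f θ,
      (‖∑ n, star ((1 / Real.sqrt N : ℝ) : ℂ) * a f θ n‖) ^ 2 = N) := by
  rintro α β γ rfl rfl rfl proj hproj a ha
  have proj_eq_zero : ∀ θ, proj θ = 0 := fun θ => by
    rw [hproj]
    simp only [Real.sin_zero, Real.cos_zero, zero_mul, mul_zero, one_mul, sub_zero, zero_add,
      add_zero]
    linear_combination Real.cos θ * cos_add_pi_div_two_mul_cos_add_sin_add_pi_div_two_mul_sin φ₀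
  have response_eq_one : ∀ f θ n, a f θ n = 1 := fun f θ n => by
    simp [ha, proj_eq_zero]
  refine ⟨response_eq_one, fun f θ => ?_⟩
  simpa [response_eq_one, Complex.conj_ofReal] using norm_sum_inv_sqrt_card_sq (Fin N)

/-- Theorem 1: with α = β = 0 and γ = φ₀ + π/2, the rotated ULA has a
frequency- and angle-independent array response, and the uniform beamformer
achieves the full array gain `N` at every frequency and elevation angle. -/
theorem ula_rotation_eliminates_beam_squint {N : ℕ} (hN : 1 ≤ N)
    (c : ℝ) (hc : 0 < c) (φ₀ : ℝ) (x : Fin N → ℝ) :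
    ∀ α β γ : ℝ, α = 0 → β = 0 → γ = φ₀ + Real.pi / 2 →
    -- the effective phase projection r₁ᵀ v(θ)
    ∀ proj : ℝ → ℝ,
    (∀ θ, proj θ =
      (Real.cos β * Real.cos γ) * (Real.cos θ * Real.cos φ₀) +
      (Real.sin α * Real.sin β * Real.cos γ + Real.cos α * Real.sin γ) *
        (Real.cos θ * Real.sin φ₀) +
      (Real.sin α * Real.sin γ - Real.cos α * Real.sin β * Real.cos γ) * Real.sin θ) →
    -- array response entries
    ∀ a : ℝ → ℝ → Fin N → ℂ,
    (∀ f θ n, a f θ n =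
      Complex.exp (Complex.I * (((2 * Real.pi * f / c) * proj θ * x n : ℝ) : ℂ))) →
    (∀ f θ n, a f θ n = 1) ∧
    (∀ f θ,
      (‖∑ n, star ((1 / Real.sqrt N : ℝ) : ℂ) * a f θ n‖) ^ 2 = N) :=
  ula_rotation_eliminates_beam_squint_general c φ₀ x
end

section
/- Let s₁, s₂ ∈ ℝ³ be two distinct columns of a rotation matrix R ∈ SO(3) (so s₁ᵀ s₂ = 0 and ‖s₁‖ = ‖s₂‖ = 1), and fix φ₀ ∈ ℝ and a nondegenerate interval [θ_min, θ_max]. With v(θ) = [cos θ cos φ₀, cos θ sin φ₀, sin θ]ᵀ, it is impossible that v(θ)ᵀ s₁ = 0 and v(θ)ᵀ s₂ = 0 simultaneously for all θ ∈ [θ_min, θ_max]. -/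
open Real Set Matrix

/-!
Each projection `θ ↦ v(θ) ⬝ᵥ s` is a combination `a cos θ + b sin θ`, which can only vanish on an
interval of positive length if `a = b = 0`. Hence every `s` with vanishing projection is
orthogonal both to `e₃` and to the horizontal direction `(cos φ₀, sin φ₀, 0)`, so it is a multiple
of `(-sin φ₀, cos φ₀, 0)`. Two such vectors are parallel, so by equality in Cauchy–Schwarz they
cannot be orthonormal.
-/

/-- The direction `v(θ)` at elevation `θ` and azimuth `φ`. -/
noncomputable def steeringVector (φ θ : ℝ) : Fin 3 → ℝ :=
  ![cos θ * cos φ, cos θ * sin φ, sin θ]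

lemma steeringVector_dotProduct (φ θ : ℝ) (s : Fin 3 → ℝ) :
    steeringVector φ θ ⬝ᵥ s = cos θ * (cos φ * s 0 + sin φ * s 1) + sin θ * s 2 := by
  simp only [steeringVector, dotProduct, Fin.sum_univ_three, cons_val_zero, cons_val_one,
    cons_val_two, tail_cons, head_cons]
  ring

lemma eq_zero_of_cos_mul_add_sin_mul_eq_zero {θ₁ θ₂ a b : ℝ} (hsin : sin (θ₂ - θ₁) ≠ 0)
    (h₁ : cos θ₁ * a + sin θ₁ * b = 0) (h₂ : cos θ₂ * a + sin θ₂ * b = 0) :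
    a = 0 ∧ b = 0 := by
  rw [sin_sub] at hsin
  constructor
  · refine (mul_eq_zero.1 ?_).resolve_left hsin
    linear_combination sin θ₂ * h₁ - sin θ₁ * h₂
  · refine (mul_eq_zero.1 ?_).resolve_left hsin
    linear_combination cos θ₁ * h₂ - cos θ₂ * h₁

lemma exists_mem_Icc_sin_sub_ne_zero {θmin θmax : ℝ} (hθ : θmin < θmax) :
    ∃ θ ∈ Icc θmin θmax, sin (θ - θmin) ≠ 0 := by
  set δ := min (θmax - θmin) (π / 2)
  have hδ_pos : 0 < δ := lt_min (by linarith) (by positivity)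
  have hδ_lt : δ < π := (min_le_right _ _).trans_lt (by linarith [pi_pos])
  refine ⟨θmin + δ, ⟨by linarith, by linarith [min_le_left (θmax - θmin) (π / 2)]⟩, ?_⟩
  rw [add_sub_cancel_left]
  exact (sin_pos_of_pos_of_lt_pi hδ_pos hδ_lt).ne'

lemma eq_zero_of_cos_mul_add_sin_mul_eq_zero_on_Icc {θmin θmax a b : ℝ} (hθ : θmin < θmax)
    (h : ∀ θ ∈ Icc θmin θmax, cos θ * a + sin θ * b = 0) :
    a = 0 ∧ b = 0 := by
  obtain ⟨θ, hθ_mem, hsin⟩ := exists_mem_Icc_sin_sub_ne_zero hθ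
  exact eq_zero_of_cos_mul_add_sin_mul_eq_zero hsin (h θmin (left_mem_Icc.2 hθ.le)) (h θ hθ_mem)

lemma exists_eq_smul_of_steeringVector_dotProduct_eq_zero {φ θmin θmax : ℝ} {s : Fin 3 → ℝ}
    (hθ : θmin < θmax) (h : ∀ θ ∈ Icc θmin θmax, steeringVector φ θ ⬝ᵥ s = 0) :
    ∃ c : ℝ, s = c • ![-sin φ, cos φ, 0] := by
  obtain ⟨horiz, vert⟩ := eq_zero_of_cos_mul_add_sin_mul_eq_zero_on_Icc hθ fun θ hθ_mem => by
    rw [← steeringVector_dotProduct]; exact h θ hθ_mem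
  refine ⟨cos φ * s 1 - sin φ * s 0, ?_⟩
  ext i
  fin_cases i <;> simp only [Fin.zero_eta, Fin.mk_one, Fin.reduceFinMk, Fin.isValue, Pi.smul_apply,
    cons_val_zero, cons_val_one, cons_val, smul_eq_mul, mul_zero, vert]
  · linear_combination cos φ * horiz - s 0 * sin_sq_add_cos_sq φ
  · linear_combination sin φ * horiz - s 1 * sin_sq_add_cos_sq φ

lemma sq_smul_dotProduct_smul {R n : Type*} [CommRing R] [Fintype n] (c₁ c₂ : R) (w : n → R) :
    (c₁ • w ⬝ᵥ c₂ • w) ^ 2 = (c₁ • w ⬝ᵥ c₁ • w) * (c₂ • w ⬝ᵥ c₂ • w) := by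
  simp only [smul_dotProduct, dotProduct_smul, smul_eq_mul]
  ring

/-- Appendix B: no rotation of a planar array can make both effective phase
projections vanish over a nondegenerate elevation interval. -/
theorem upa_cannot_eliminate_beam_squint
    (s₁ s₂ : Fin 3 → ℝ)
    (horth : s₁ ⬝ᵥ s₂ = 0) (hs₁ : s₁ ⬝ᵥ s₁ = 1) (hs₂ : s₂ ⬝ᵥ s₂ = 1)
    (φ₀ θmin θmax : ℝ) (hθ : θmin < θmax) :
    ¬ (∀ θ ∈ Set.Icc θmin θmax,
        (![Real.cos θ * Real.cos φ₀, Real.cos θ * Real.sin φ₀, Real.sin θ] ⬝ᵥ s₁ = 0) ∧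
        (![Real.cos θ * Real.cos φ₀, Real.cos θ * Real.sin φ₀, Real.sin θ] ⬝ᵥ s₂ = 0)) := by
  intro h
  obtain ⟨c₁, rfl⟩ :=
    exists_eq_smul_of_steeringVector_dotProduct_eq_zero hθ fun θ hθ_mem => (h θ hθ_mem).1
  obtain ⟨c₂, rfl⟩ :=
    exists_eq_smul_of_steeringVector_dotProduct_eq_zero hθ fun θ hθ_mem => (h θ hθ_mem).2
  have hcs := sq_smul_dotProduct_smul c₁ c₂ ![-sin φ₀, cos φ₀, 0]
  rw [horth, hs₁, hs₂] at hcs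
  norm_num at hcs
end
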